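/- arXiv:0805.4049 — 5 statements merged into one kernel-verified Lean document; each statement's English description precedes it below -/
import Mathlib

section
/- Let Σ be a finite nonempty alphabet and let m, n be integers with 0 < m < n. Suppose S is a set of words over Σ such that every word of S has length m or length n (i.e., S ⊆ Σ^m ∪ Σ^n). If the Kleene star S* is co-finite (its complement in Σ* is a finite set of words), then S contains every word of length m (i.e., Σ^m ⊆ S). -/
/-!
Suppose a word `w` of length `m` lies outside `S`, and pad it to a word `v = w aⁿ⁻ᵐ` of length
`n`. In a factorization of `vᵏ w` into words of `S`, the first factor is a prefix of length `m`
or `n`: the former is `w ∉ S`, the latter is `v` and leaves `vᵏ⁻¹ w`. Hence no `vᵏ w` lies in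
`S∗`, and these infinitely many words contradict co-finiteness.
-/

open Computability

namespace Language

variable {α : Type*}

theorem eq_nil_or_exists_append_of_mem_kstar {l : Language α} {x : List α} (hx : x ∈ l∗) :
    x = [] ∨ ∃ y ∈ l, ∃ z ∈ l∗, y ++ z = x := by
  rwa [← one_add_self_mul_kstar_eq_kstar, mem_add, mem_one, mem_mul] at hx

end Language

namespace List

variable {α : Type*}

theorem length_flatten_replicate_append (k : ℕ) (v w : List α) :
    ((replicate k v).flatten ++ w).length = k * v.length + w.length := by
  simp

theorem flatten_replicate_succ_append (k : ℕ) (v w : List α) :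
    (replicate (k + 1) v).flatten ++ w = v ++ ((replicate k v).flatten ++ w) := by
  simp [replicate_succ]

theorem prefix_flatten_replicate_append {v w : List α} (hwv : w <+: v) (k : ℕ) :
    w <+: (replicate k v).flatten ++ w := by
  cases k with
  | zero => simp
  | succ k =>
    rw [flatten_replicate_succ_append]
    exact hwv.trans (prefix_append _ _)

theorem injective_flatten_replicate_append {v : List α} (hv : v ≠ []) (w : List α) :
    Function.Injective fun k => (replicate k v).flatten ++ w := by
  intro j k hjk
  have hlen := congrArg length hjk
  simp only [length_flatten_replicate_append, Nat.add_right_cancel_iff] at hlen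
  exact Nat.eq_of_mul_eq_mul_right (length_pos_iff.mpr hv) hlen

end List

open List

section TwoLengths

variable {α : Type*} {S : Language α} {m n : ℕ} {v w : List α}

theorem exists_eq_flatten_replicate_append_of_append_eq (hmn : m < n)
    (hS : ∀ y ∈ S, y.length = m ∨ y.length = n) (hw : w.length = m) (hwS : w ∉ S)
    (hwv : w <+: v) (hv : v.length = n) {k : ℕ} {y z : List α} (hy : y ∈ S)
    (hyz : y ++ z = (replicate k v).flatten ++ w) :
    ∃ j, k = j + 1 ∧ z = (replicate j v).flatten ++ w := by
  rcases hS y hy with hym | hyn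
  · obtain ⟨t, ht⟩ := prefix_flatten_replicate_append hwv k
    have hyw : y = w := (append_inj (hyz.trans ht.symm) (by omega)).1
    exact absurd (hyw ▸ hy) hwS
  · cases k with
    | zero =>
      have hlen := congrArg length hyz
      simp only [replicate_zero, flatten_nil, nil_append, length_append] at hlen
      omega
    | succ j =>
      rw [flatten_replicate_succ_append] at hyz
      exact ⟨j, rfl, (append_inj hyz (by omega)).2⟩

theorem flatten_replicate_append_notMem_kstar (hm : 0 < m) (hmn : m < n)
    (hS : ∀ y ∈ S, y.length = m ∨ y.length = n) (hw : w.length = m) (hwS : w ∉ S)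
    (hwv : w <+: v) (hv : v.length = n) (k : ℕ) :
    (replicate k v).flatten ++ w ∉ S∗ := by
  induction k using Nat.strong_induction_on with
  | _ k ih =>
    intro hx
    rcases Language.eq_nil_or_exists_append_of_mem_kstar hx with hnil | ⟨y, hy, z, hz, hyz⟩
    · rw [append_eq_nil_iff] at hnil
      rw [hnil.2, length_nil] at hw
      omega
    · obtain ⟨j, rfl, rfl⟩ :=
        exists_eq_flatten_replicate_append_of_append_eq hmn hS hw hwS hwv hv hy hyz
      exact ih j (Nat.lt_succ_self j) hz

end TwoLengths

theorem kao_lemma_general {α : Type*} [Nonempty α] {m n : ℕ}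
    (hm : 0 < m) (hmn : m < n) (S : Language α)
    (hS : ∀ w ∈ S, w.length = m ∨ w.length = n)
    (hcf : {w : List α | w ∉ S∗}.Finite) :
    ∀ w : List α, w.length = m → w ∈ S := by
  intro w hw
  by_contra hwS
  obtain ⟨a⟩ := ‹Nonempty α›
  set v := w ++ replicate (n - m) a
  have hv : v.length = n := by simp [v, hw]; omega
  have hv_ne : v ≠ [] := ne_nil_of_length_pos (by omega)
  have hout := flatten_replicate_append_notMem_kstar hm hmn hS hw hwS (prefix_append _ _) hv
  exact hcf.not_infinite
    (Set.infinite_of_injective_forall_mem (injective_flatten_replicate_append hv_ne w) hout)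

/-- If `S ⊆ Σ^m ∪ Σ^n` with `0 < m < n` and the Kleene star `S∗` is co-finite
(its complement in the set of all words is finite), then `Σ^m ⊆ S`. -/
theorem kao_lemma {α : Type*} [Fintype α] [Nonempty α] {m n : ℕ}
    (hm : 0 < m) (hmn : m < n) (S : Language α)
    (hS : ∀ w ∈ S, w.length = m ∨ w.length = n)
    (hcf : {w : List α | w ∉ S∗}.Finite) :
    ∀ w : List α, w.length = m → w ∈ S :=
  kao_lemma_general hm hmn S hS hcf
end

section
/- Let Σ be a finite nonempty alphabet and n ≥ 1 an integer. Suppose S is a set of words over Σ satisfying Σ^{n+1} ⊆ S ⊆ Σ^n ∪ Σ^{n+1} (S contains all words of length n+1, and every word of S has length n or n+1). If the Kleene star S* is co-finite, then S = Σ^n ∪ Σ^{n+1}, i.e., S also contains every word of length n. -/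
/-!
Suppose `w ∉ S` with `|w| = n`, and fix a letter `c`. Every word of the form `w c w c ⋯ c w`
lies outside `S∗`: in a factorisation into nonempty words of `S`, the first factor has length
`n` or `n + 1`; the former forces it to be `w`, the latter forces it to be `w c`, and peeling
it off leaves a shorter word of the same form (or, at the end, the word `w` alone, which is
too short for a factor of length `n + 1`). These words are pairwise distinct, so the
complement of `S∗` would be infinite.
-/

open Computability

namespace Language

variable {α : Type*} {l : Language α} {x : List α}

theorem exists_append_of_mem_kstar (hx : x ∈ l∗) (hne : x ≠ []) :
    ∃ a ∈ l, ∃ b ∈ l∗, x = a ++ b := by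
  obtain ⟨L, rfl, hL⟩ := mem_kstar_iff_exists_nonempty.1 hx
  cases L with
  | nil => exact absurd rfl hne
  | cons a L =>
    exact ⟨a, (hL a List.mem_cons_self).1, L.flatten,
      join_mem_kstar fun y hy => (hL y (List.mem_cons_of_mem a hy)).1, rfl⟩

end Language

section RepeatWithSep

variable {α : Type*}

/-- `repeatWithSep w c k = w c w c ⋯ c w` with `k + 1` copies of `w`. -/
def repeatWithSep (w : List α) (c : α) : ℕ → List α
  | 0 => w
  | k + 1 => w ++ c :: repeatWithSep w c k

theorem repeatWithSep_length (w : List α) (c : α) (k : ℕ) :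
    (repeatWithSep w c k).length = w.length + k * (w.length + 1) := by
  induction k with
  | zero => simp [repeatWithSep]
  | succ k ih => simp [repeatWithSep, ih]; ring

theorem repeatWithSep_injective (w : List α) (c : α) :
    Function.Injective (repeatWithSep w c) := by
  intro j k h
  have hlen := congrArg List.length h
  simp only [repeatWithSep_length, Nat.add_left_cancel_iff] at hlen
  exact Nat.eq_of_mul_eq_mul_right w.length.succ_pos hlen

theorem exists_repeatWithSep_eq_append (w : List α) (c : α) (k : ℕ) :
    ∃ t, repeatWithSep w c k = w ++ t := by
  cases k with
  | zero => exact ⟨[], (List.append_nil w).symm⟩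
  | succ k => exact ⟨_, rfl⟩

variable {n : ℕ} {S : Language α} {w : List α}

theorem exists_long_factor_of_repeatWithSep_mem_kstar (hn : 1 ≤ n)
    (hS : ∀ v ∈ S, v.length = n ∨ v.length = n + 1) (hw : w.length = n) (hwS : w ∉ S)
    {c : α} {k : ℕ} (hmem : repeatWithSep w c k ∈ S∗) :
    ∃ a ∈ S, ∃ b ∈ S∗, a.length = n + 1 ∧ repeatWithSep w c k = a ++ b := by
  have hne : repeatWithSep w c k ≠ [] := by
    rw [← List.length_pos_iff, repeatWithSep_length]; omega
  obtain ⟨a, haS, b, hb, hab⟩ := Language.exists_append_of_mem_kstar hmem hne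
  refine ⟨a, haS, b, hb, (hS a haS).resolve_left fun ha => hwS ?_, hab⟩
  obtain ⟨t, ht⟩ := exists_repeatWithSep_eq_append w c k
  exact (List.append_inj (hab.symm.trans ht) (ha.trans hw.symm)).1 ▸ haS

theorem repeatWithSep_not_mem_kstar (hn : 1 ≤ n)
    (hS : ∀ v ∈ S, v.length = n ∨ v.length = n + 1) (hw : w.length = n) (hwS : w ∉ S)
    (c : α) (k : ℕ) : repeatWithSep w c k ∉ S∗ := by
  induction k with
  | zero =>
    intro hmem
    obtain ⟨a, -, b, -, ha, hab⟩ :=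
      exists_long_factor_of_repeatWithSep_mem_kstar hn hS hw hwS hmem
    have hlen := congrArg List.length hab
    simp only [repeatWithSep, List.length_append] at hlen
    omega
  | succ k ih =>
    intro hmem
    obtain ⟨a, -, b, hb, ha, hab⟩ :=
      exists_long_factor_of_repeatWithSep_mem_kstar hn hS hw hwS hmem
    have hsplit : a ++ b = (w ++ [c]) ++ repeatWithSep w c k := by
      rw [← hab, repeatWithSep, List.append_assoc, List.singleton_append]
    exact ih ((List.append_inj hsplit (by simp [ha, hw])).2 ▸ hb)

end RepeatWithSep

theorem cofinite_star_forces_full_general {α : Type*} [Nonempty α] {n : ℕ}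
    (hn : 1 ≤ n) (S : Language α)
    (hsub : ∀ w : List α, w.length = n + 1 → w ∈ S)
    (hsup : ∀ w ∈ S, w.length = n ∨ w.length = n + 1)
    (hcf : {w : List α | w ∉ S∗}.Finite) :
    S = ({w | w.length = n} ∪ {w | w.length = n + 1} : Set (List α)) := by
  ext w
  refine ⟨hsup w, fun hw => hw.elim (fun hwn => ?_) (hsub w)⟩
  by_contra hwS
  obtain ⟨c⟩ := ‹Nonempty α›
  exact Set.infinite_of_injective_forall_mem (repeatWithSep_injective w c)
    (repeatWithSep_not_mem_kstar hn hsup hwn hwS c) hcf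

/-- If `Σ^{n+1} ⊆ S ⊆ Σ^n ∪ Σ^{n+1}` and the Kleene star `S∗` is co-finite,
then `S = Σ^n ∪ Σ^{n+1}`. -/
theorem cofinite_star_forces_full {α : Type*} [Fintype α] [Nonempty α] {n : ℕ}
    (hn : 1 ≤ n) (S : Language α)
    (hsub : ∀ w : List α, w.length = n + 1 → w ∈ S)
    (hsup : ∀ w ∈ S, w.length = n ∨ w.length = n + 1)
    (hcf : {w : List α | w ∉ S∗}.Finite) :
    S = ({w | w.length = n} ∪ {w | w.length = n + 1} : Set (List α)) :=
  cofinite_star_forces_full_general hn S hsub hsup hcf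
end

section
/- Let Σ be a finite nonempty alphabet and n ≥ 1 an integer. If S is a set of words over Σ containing every word of length n and every word of length n+1 (i.e., Σ^n ∪ Σ^{n+1} ⊆ S), then the Kleene star S* is co-finite; in fact every word over Σ of length at least n(n−1) belongs to S*. -/
/-!
The lengths `ℓ` for which every word of length `ℓ` lies in `S∗` form an additive submonoid of `ℕ`:
a word of length `ℓ₁ + ℓ₂` splits into words of lengths `ℓ₁` and `ℓ₂`. By hypothesis this
submonoid contains `n` and `n + 1`, and by the Chicken McNugget theorem every `k ≥ n (n - 1)`,
i.e. every `k` beyond the Frobenius number `n (n + 1) - n - (n + 1)`, is a sum of copies of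
`n` and `n + 1` (for `n ≤ 1` this is trivial, as `1` is one of the generators).
-/

open Computability

theorem Nat.mem_closure_pair_succ_of_mul_pred_le {n k : ℕ} (hk : n * (n - 1) ≤ k) :
    k ∈ AddSubmonoid.closure {n, n + 1} := by
  rcases Nat.lt_or_ge 1 n with hn | hn
  · have hfrob := frobeniusNumber_pair (Nat.coprime_self_add_right.mpr (Nat.coprime_one_right n))
      hn (Nat.lt_succ_of_lt hn)
    refine (frobeniusNumber_iff.mp hfrob).2 k ?_
    have hsq : n * (n + 1) = n * (n - 1) + 2 * n := by
      obtain ⟨m, rfl⟩ : ∃ m, n = m + 1 := ⟨n - 1, by omega⟩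
      simp only [Nat.add_sub_cancel]
      ring
    have hpos : 0 < n * (n - 1) := Nat.mul_pos (by omega) (by omega)
    omega
  · have hone : 1 ∈ AddSubmonoid.closure ({n, n + 1} : Set ℕ) :=
      AddSubmonoid.subset_closure (by interval_cases n <;> simp)
    simpa using AddSubmonoid.nsmul_mem _ hone k

namespace Language

variable {α : Type*}

def kstarFullLengths (S : Language α) : AddSubmonoid ℕ where
  carrier := {ℓ | ∀ w : List α, w.length = ℓ → w ∈ S∗}
  zero_mem' w hw := by
    rw [List.length_eq_zero_iff.mp hw]
    exact nil_mem_kstar S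
  add_mem' {ℓ₁ ℓ₂} h₁ h₂ w hw := by
    rw [← List.take_append_drop ℓ₁ w, ← kstar_mul_kstar S]
    exact append_mem_mul (h₁ _ (by rw [List.length_take]; omega))
      (h₂ _ (by rw [List.length_drop]; omega))

theorem closure_le_kstarFullLengths (S : Language α) :
    AddSubmonoid.closure {ℓ | ∀ w : List α, w.length = ℓ → w ∈ S} ≤ kstarFullLengths S :=
  AddSubmonoid.closure_le.mpr fun _ hℓ w hw ↦ (le_kstar : S ≤ S∗) (hℓ w hw)

end Language

theorem full_two_lengths_star_cofinite_general {α : Type*} [Fintype α] {n : ℕ}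
    (S : Language α)
    (hsub : ∀ w : List α, w.length = n ∨ w.length = n + 1 → w ∈ S) :
    {w : List α | w ∉ S∗}.Finite ∧
      ∀ w : List α, n * (n - 1) ≤ w.length → w ∈ S∗ := by
  have hlong (w : List α) (hw : n * (n - 1) ≤ w.length) : w ∈ S∗ := by
    have hgen : ({n, n + 1} : Set ℕ) ⊆ {ℓ | ∀ w : List α, w.length = ℓ → w ∈ S} := by
      rintro ℓ (rfl | rfl) w hw
      exacts [hsub w (.inl hw), hsub w (.inr hw)]
    exact Language.closure_le_kstarFullLengths S (AddSubmonoid.closure_mono hgen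
      (Nat.mem_closure_pair_succ_of_mul_pred_le hw)) w rfl
  refine ⟨(List.finite_length_lt α (n * (n - 1))).subset fun w hw ↦ ?_, hlong⟩
  by_contra hshort
  exact hw (hlong w (by simpa using hshort))

/-- If `S` contains all words of length `n` and all words of length `n+1`, then `S∗`
is co-finite; in fact every word of length at least `n (n - 1)` lies in `S∗`. -/
theorem full_two_lengths_star_cofinite {α : Type*} [Fintype α] [Nonempty α] {n : ℕ}
    (hn : 1 ≤ n) (S : Language α)
    (hsub : ∀ w : List α, w.length = n ∨ w.length = n + 1 → w ∈ S) :
    {w : List α | w ∉ S∗}.Finite ∧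
      ∀ w : List α, n * (n - 1) ≤ w.length → w ∈ S∗ :=
  full_two_lengths_star_cofinite_general S hsub
end

section
/- Consider a 3SAT instance over n ≥ 1 Boolean variables indexed by Fin n, consisting of m clauses c_1, …, c_m, where each clause is a triple of literals and a literal is a pair (i, b) ∈ Fin n × Bool, meaning variable i must take value b. An assignment f : Fin n → Bool satisfies a clause if it agrees with at least one of its three literals. If the instance is UNSATISFIABLE (every assignment falsifies some clause), then, letting F_c be the set of words w over Bool of length n whose induced assignment i ↦ (i-th letter of w) falsifies clause c, and letting S = (F_{c_1} ∪ ⋯ ∪ F_{c_m}) ∪ Bool^{n+1}, the Kleene star S* is co-finite; in fact S* contains every word over Bool of length at least n(n−1). -/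
/-!
Every word of length `n` lies in `S`: by unsatisfiability, the assignment it spells falsifies some
clause. Every word of length `n + 1` lies in `S` outright. Hence `S∗` contains every word whose
length is a sum of `n`s and `(n + 1)`s, and since `n` and `n + 1` are coprime with Frobenius number
`n² - n - 1`, those are all lengths `≥ n (n - 1)`.
-/

open Computability

/-- A literal over `n` variables: a variable index and the Boolean value it demands. -/
abbrev Literal (n : ℕ) := Fin n × Bool

/-- A 3SAT clause: a triple of literals. -/
abbrev Clause (n : ℕ) := Literal n × Literal n × Literal n

/-- An assignment satisfies a clause if it agrees with at least one of its three literals. -/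
def SatisfiesClause {n : ℕ} (f : Fin n → Bool) (c : Clause n) : Prop :=
  f c.1.1 = c.1.2 ∨ f c.2.1.1 = c.2.1.2 ∨ f c.2.2.1 = c.2.2.2

/-- The words of length `n` over `Bool` whose induced assignment falsifies clause `c`. -/
def falsifyingWords {n : ℕ} (c : Clause n) : Language Bool :=
  {w : List Bool | ∃ h : w.length = n,
    ¬ SatisfiesClause (fun i : Fin n => w.get (Fin.cast h.symm i)) c}

namespace Language

variable {α : Type*}

theorem append_mem_kstar {S : Language α} {u v : List α} (hu : u ∈ S∗) (hv : v ∈ S∗) :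
    u ++ v ∈ S∗ :=
  kstar_mul_kstar S ▸ append_mem_mul hu hv

theorem mem_kstar_of_length_mem_closure {S : Language α} {K : Set ℕ}
    (hK : ∀ w : List α, w.length ∈ K → w ∈ S) {w : List α}
    (hw : w.length ∈ AddSubmonoid.closure K) : w ∈ S∗ := by
  suffices ∀ k ∈ AddSubmonoid.closure K, ∀ w : List α, w.length = k → w ∈ S∗ from
    this _ hw w rfl
  intro k hk
  induction hk using AddSubmonoid.closure_induction with
  | mem k hk => exact fun w hw => le_kstar (a := S) (hK w (hw ▸ hk))
  | zero => exact fun w hw => List.length_eq_zero_iff.1 hw ▸ nil_mem_kstar S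
  | add k l _ _ ihk ihl =>
    intro w hw
    rw [← List.take_append_drop k w]
    exact append_mem_kstar (ihk _ (by rw [List.length_take]; omega))
      (ihl _ (by rw [List.length_drop]; omega))

end Language

theorem mem_closure_self_succ_of_mul_pred_le {n L : ℕ} (hL : n * (n - 1) ≤ L) :
    L ∈ AddSubmonoid.closure ({n, n + 1} : Set ℕ) := by
  rw [AddSubmonoid.mem_closure_pair]
  rcases Nat.eq_zero_or_pos n with rfl | hn
  · exact ⟨0, L, by simp⟩
  -- With `L = q n + r`, `r < n`: the bound forces `r ≤ q`, and `L = (q - r) n + r (n + 1)`.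
  have hrq : L % n ≤ L / n := by
    by_contra! h
    have hr := Nat.mod_lt L hn
    have hle : n * (L / n + 1) ≤ n * (n - 1) := Nat.mul_le_mul_left n (by omega)
    rw [Nat.mul_succ] at hle
    have := Nat.div_add_mod L n
    omega
  refine ⟨L / n - L % n, L % n, ?_⟩
  simp only [smul_eq_mul]
  calc (L / n - L % n) * n + L % n * (n + 1) = n * (L / n - L % n + L % n) + L % n := by ring
    _ = L := by rw [Nat.sub_add_cancel hrq, Nat.div_add_mod]

theorem unsat_star_cofinite_general {n m : ℕ}
    (c : Fin m → Clause n)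
    (hunsat : ∀ f : Fin n → Bool, ∃ i : Fin m, ¬ SatisfiesClause f (c i))
    (S : Language Bool)
    (hS : S = ((⋃ i : Fin m, falsifyingWords (c i)) ∪
        {w | w.length = n + 1} : Set (List Bool))) :
    {w : List Bool | w ∉ S∗}.Finite ∧
      ∀ w : List Bool, n * (n - 1) ≤ w.length → w ∈ S∗ := by
  have hlengths : ∀ w : List Bool, w.length ∈ ({n, n + 1} : Set ℕ) → w ∈ S := by
    rintro w (hw | hw) <;> subst hS
    · obtain ⟨i, hi⟩ := hunsat fun j => w.get (Fin.cast hw.symm j)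
      exact Or.inl (Set.mem_iUnion.2 ⟨i, hw, hi⟩)
    · exact Or.inr hw
  have hlong : ∀ w : List Bool, n * (n - 1) ≤ w.length → w ∈ S∗ := fun w hw =>
    Language.mem_kstar_of_length_mem_closure hlengths (mem_closure_self_succ_of_mul_pred_le hw)
  exact ⟨(List.finite_length_lt Bool (n * (n - 1))).subset fun w hw =>
    lt_of_not_ge fun h => hw (hlong w h), hlong⟩

/-- If the 3SAT instance is unsatisfiable, the star of
`S = (F_{c₁} ∪ ⋯ ∪ F_{c_m}) ∪ Bool^{n+1}` is co-finite; in fact it contains every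
word of length at least `n (n - 1)`. -/
theorem unsat_star_cofinite {n m : ℕ} (hn : 1 ≤ n)
    (c : Fin m → Clause n)
    (hunsat : ∀ f : Fin n → Bool, ∃ i : Fin m, ¬ SatisfiesClause f (c i))
    (S : Language Bool)
    (hS : S = ((⋃ i : Fin m, falsifyingWords (c i)) ∪
        {w | w.length = n + 1} : Set (List Bool))) :
    {w : List Bool | w ∉ S∗}.Finite ∧
      ∀ w : List Bool, n * (n - 1) ≤ w.length → w ∈ S∗ :=
  unsat_star_cofinite_general c hunsat S hS
end

section
/- Let M be a deterministic finite automaton over a finite nonempty alphabet Σ whose state set has exactly n states (n ≥ 1), and let L ⊆ Σ* be the language accepted by M. Then L is co-finite (its complement Σ* \ L is finite) if and only if M accepts every word of length ℓ for every ℓ with n ≤ ℓ < 2n. -/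
/-!
If an `n`-state DFA accepts a word of length at least `n`, the pumping lemma pumps it up into
infinitely many accepted words, and pumps it down (removing a nonempty factor of length at most
`n`) until its length lies in `[n, 2n)`. Hence an `n`-state DFA accepts infinitely many words iff
it accepts one whose length lies in `[n, 2n)`; apply this to the complement automaton.
-/

namespace DFA

variable {α σ : Type*} [Fintype σ] (M : DFA α σ)

theorem accepts_infinite_of_mem_of_card_le_length {w : List α} (hw : w ∈ M.accepts)
    (hlen : Fintype.card σ ≤ w.length) : M.accepts.Infinite := by
  obtain ⟨a, b, c, -, -, hb, hpump⟩ := M.pumping_lemma hw hlen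
  have hb_pos : 0 < b.length := List.length_pos_iff.mpr hb
  refine Set.infinite_of_injective_forall_mem
    (f := fun k : ℕ => a ++ (List.replicate k b).flatten ++ c) (fun i j hij => ?_) fun k => ?_
  · have hlen_eq := congrArg List.length hij
    simp only [List.length_append, List.length_flatten, List.map_replicate, List.sum_replicate,
      smul_eq_mul] at hlen_eq
    exact Nat.eq_of_mul_eq_mul_right hb_pos (by omega)
  · refine hpump <|
      Language.mem_mul.mpr ⟨_, Language.mem_mul.mpr ⟨a, rfl, _, ?_, rfl⟩, c, rfl, rfl⟩
    exact Language.join_mem_kstar fun y hy => by rw [List.eq_of_mem_replicate hy]; rfl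

theorem exists_mem_accepts_length_lt_of_card_le_length {w : List α} (hw : w ∈ M.accepts)
    (hlen : Fintype.card σ ≤ w.length) :
    ∃ v ∈ M.accepts, w.length - Fintype.card σ ≤ v.length ∧ v.length < w.length := by
  obtain ⟨a, b, c, rfl, hab, hb, hpump⟩ := M.pumping_lemma hw hlen
  have hac : a ++ c ∈ M.accepts :=
    hpump (Language.mem_mul.mpr ⟨a, Language.mem_mul.mpr
      ⟨a, rfl, [], Language.nil_mem_kstar _, List.append_nil a⟩, c, rfl, rfl⟩)
  have hb_pos : 0 < b.length := List.length_pos_iff.mpr hb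
  refine ⟨a ++ c, hac, ?_, ?_⟩ <;> simp only [List.length_append] <;> omega

theorem exists_mem_accepts_length_mem_Ico_of_card_le_length {w : List α} (hw : w ∈ M.accepts)
    (hlen : Fintype.card σ ≤ w.length) :
    ∃ v ∈ M.accepts, Fintype.card σ ≤ v.length ∧ v.length < 2 * Fintype.card σ := by
  induction hk : w.length using Nat.strong_induction_on generalizing w with
  | _ k ih =>
    subst hk
    by_cases hshort : w.length < 2 * Fintype.card σ
    · exact ⟨w, hw, hlen, hshort⟩
    obtain ⟨v, hv, hv_ge, hv_lt⟩ := M.exists_mem_accepts_length_lt_of_card_le_length hw hlen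
    exact ih v.length hv_lt hv (by omega) rfl

theorem accepts_infinite_iff [Fintype α] :
    M.accepts.Infinite ↔
      ∃ w ∈ M.accepts, Fintype.card σ ≤ w.length ∧ w.length < 2 * Fintype.card σ := by
  refine ⟨fun hinf => ?_, fun ⟨w, hw, hlen, _⟩ =>
    M.accepts_infinite_of_mem_of_card_le_length hw hlen⟩
  obtain ⟨w, hw, hlong⟩ :=
    hinf.exists_notMem_finite (List.finite_length_lt α (Fintype.card σ))
  exact M.exists_mem_accepts_length_mem_Ico_of_card_le_length hw (not_lt.mp hlong)

end DFA

theorem dfa_cofinite_iff_general {α σ : Type*} [Fintype α] [Fintype σ]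
    {n : ℕ} (hcard : Fintype.card σ = n) (M : DFA α σ) :
    {w : List α | w ∉ M.accepts}.Finite ↔
      ∀ w : List α, n ≤ w.length → w.length < 2 * n → w ∈ M.accepts := by
  subst hcard
  have hrejects : {w : List α | w ∉ M.accepts}.Infinite ↔ Mᶜ.accepts.Infinite := by
    rw [DFA.accepts_compl]; rfl
  rw [← Set.not_infinite, hrejects, Mᶜ.accepts_infinite_iff]
  simp only [DFA.accepts_compl, not_exists, not_and]
  exact forall_congr' fun w =>
    ⟨fun h hge hlt => not_not.mp fun hw => h hw hge hlt, fun h hw hge hlt => hw (h hge hlt)⟩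

/-- An `n`-state DFA accepts a co-finite language iff it accepts every word of
length `ℓ` for every `ℓ` with `n ≤ ℓ < 2 n`. -/
theorem dfa_cofinite_iff {α σ : Type*} [Fintype α] [Nonempty α] [Fintype σ]
    {n : ℕ} (hn : 1 ≤ n) (hcard : Fintype.card σ = n) (M : DFA α σ) :
    {w : List α | w ∉ M.accepts}.Finite ↔
      ∀ w : List α, n ≤ w.length → w.length < 2 * n → w ∈ M.accepts :=
  dfa_cofinite_iff_general hcard M
end
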